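/- arXiv:1512.01262 — 9 statements merged into one kernel-verified Lean document; each statement's English description precedes it below -/
import Mathlib

section
/- Let X be a finite indecomposable quandle with enveloping group G_X. Since G_X acts transitively on X and the center Z(G_X) is contained in the kernel of this action, every conjugacy class of G_X is finite. -/
open Rack Quandles

/-! Conjugating a generator `x` of `G_X` by `g` gives the generator `g • x`, so an element acting
trivially on `X` commutes with all generators: the kernel of the action is central. For finite `X`
this kernel has finite index, hence so does the centralizer of every `g`, and the conjugacy class
of `g` is in bijection with the cosets of its centralizer. -/

theorem finite_conjugatesOf_of_finiteIndex_centralizer {G : Type*} [Group G] (g : G)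
    [(Subgroup.centralizer {g}).FiniteIndex] : (conjugatesOf g).Finite := by
  have horbit : conjugatesOf g = MulAction.orbit (ConjAct G) g := by
    ext h
    rw [ConjAct.mem_orbit_conjAct, isConj_comm]
    rfl
  have hindex : (Subgroup.centralizer {g}).index = (conjugatesOf g).ncard := by
    rw [horbit, ← MulAction.index_stabilizer, Subgroup.centralizer_eq_comap_stabilizer]
    exact Subgroup.index_comap_of_surjective _ ConjAct.toConjAct.surjective
  exact Set.finite_of_ncard_ne_zero (hindex ▸ Subgroup.FiniteIndex.index_ne_zero)

namespace Rack.EnvelGroup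

variable {R : Type*} [Rack R]

theorem closure_range_toEnvelGroup :
    Subgroup.closure (Set.range (toEnvelGroup R)) = ⊤ := by
  refine Subgroup.eq_top_iff' _ |>.mpr fun g => ?_
  induction g using Quotient.inductionOn with
  | h p =>
    induction p with
    | unit => exact Subgroup.one_mem _
    | incl x => exact Subgroup.subset_closure ⟨x, rfl⟩
    | mul a b iha ihb => exact Subgroup.mul_mem _ iha ihb
    | inv a iha => exact Subgroup.inv_mem _ iha

theorem mul_toEnvelGroup_mul_inv (g : EnvelGroup R) (y : R) :
    g * toEnvelGroup R y * g⁻¹ = toEnvelGroup R (envelAction g y) := by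
  have hg : g ∈ Subgroup.closure (Set.range (toEnvelGroup R)) := by
    rw [closure_range_toEnvelGroup]; exact Subgroup.mem_top g
  induction hg using Subgroup.closure_induction generalizing y with
  | mem a ha =>
    obtain ⟨x, rfl⟩ := ha
    exact ((toEnvelGroup R).map_act' (x := x) (y := y)).symm
  | one => simp
  | mul a b _ _ iha ihb =>
    rw [show a * b * toEnvelGroup R y * (a * b)⁻¹
        = a * (b * toEnvelGroup R y * b⁻¹) * a⁻¹ by group, ihb, iha, map_mul]
    rfl
  | inv a _ iha =>
    obtain ⟨z, rfl⟩ := (envelAction a).surjective y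
    rw [← iha, map_inv, Equiv.Perm.inv_def, Equiv.symm_apply_apply]
    group

theorem ker_envelAction_le_center : envelAction.ker ≤ Subgroup.center (EnvelGroup R) := by
  intro k hk
  have hcomm (y : R) : k * toEnvelGroup R y = toEnvelGroup R y * k := by
    rw [← mul_inv_eq_iff_eq_mul, mul_toEnvelGroup_mul_inv, MonoidHom.mem_ker.mp hk]
    rfl
  have hgen : Subgroup.closure (Set.range (toEnvelGroup R)) ≤ Subgroup.centralizer {k} := by
    rw [Subgroup.closure_le]
    rintro _ ⟨y, rfl⟩
    exact Subgroup.mem_centralizer_singleton_iff.mpr (hcomm y).symm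
  rw [closure_range_toEnvelGroup] at hgen
  exact Subgroup.mem_center_iff.mpr fun h =>
    Subgroup.mem_centralizer_singleton_iff.mp (hgen (Subgroup.mem_top h))

theorem finiteIndex_center [Finite R] : (Subgroup.center (EnvelGroup R)).FiniteIndex :=
  have := Subgroup.finiteIndex_ker (envelAction (R := R))
  Subgroup.finiteIndex_of_le ker_envelAction_le_center

end Rack.EnvelGroup

theorem stmt_0_general {X : Type*} [Quandle X] [Fintype X]
    (g : EnvelGroup X) :
    {h : EnvelGroup X | IsConj g h}.Finite := by
  have := EnvelGroup.finiteIndex_center (R := X)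
  have := Subgroup.finiteIndex_of_le (Subgroup.center_le_centralizer {g})
  exact finite_conjugatesOf_of_finiteIndex_centralizer g

/-- if the finite quandle `X` is indecomposable (its enveloping group acts
transitively on `X`), then every conjugacy class of the enveloping group `G_X` is finite. -/
theorem stmt_0 {X : Type*} [Quandle X] [Fintype X]
    (hind : ∀ x y : X, ∃ g : EnvelGroup X, envelAction g x = y)
    (g : EnvelGroup X) :
    {h : EnvelGroup X | IsConj g h}.Finite :=
  stmt_0_general g
end

section
/- Let X be a finite indecomposable quandle and ∂ : G_X → ℤ the degree homomorphism sending each generator to 1. Then ker ∂ equals the commutator subgroup [G_X, G_X]. -/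
open Rack Quandles

/-- Auxiliary: the quotient map `PreEnvelGroup X → EnvelGroup X` with its codomain
stated as `EnvelGroup X` so that group-instance search works. -/
def envelMk {X : Type*} [Quandle X] (p : Rack.PreEnvelGroup X) : EnvelGroup X := ⟦p⟧

lemma envelMk_unit {X : Type*} [Quandle X] :
    envelMk (X := X) Rack.PreEnvelGroup.unit = 1 := rfl

lemma envelMk_incl {X : Type*} [Quandle X] (x : X) :
    envelMk (Rack.PreEnvelGroup.incl x) = toEnvelGroup X x := rfl

lemma envelMk_mul {X : Type*} [Quandle X] (a b : Rack.PreEnvelGroup X) :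
    envelMk (a.mul b) = envelMk a * envelMk b := rfl

lemma envelMk_inv {X : Type*} [Quandle X] (a : Rack.PreEnvelGroup X) :
    envelMk a.inv = (envelMk a)⁻¹ := rfl

lemma envel_closure_range {X : Type*} [Quandle X] :
    Subgroup.closure (Set.range (toEnvelGroup X)) = (⊤ : Subgroup (EnvelGroup X)) := by
  rw [eq_top_iff]
  intro g _
  refine Quotient.inductionOn g ?_
  intro p
  show envelMk p ∈ _
  induction p with
  | unit => rw [envelMk_unit]; exact Subgroup.one_mem _
  | incl x => rw [envelMk_incl]; exact Subgroup.subset_closure ⟨x, rfl⟩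
  | mul a b iha ihb => rw [envelMk_mul]; exact Subgroup.mul_mem _ iha ihb
  | inv a iha => rw [envelMk_inv]; exact Subgroup.inv_mem _ iha

lemma envel_of_act {X : Type*} [Quandle X] (g : EnvelGroup X) (x : X) :
    Abelianization.of (toEnvelGroup X (envelAction g x))
      = Abelianization.of (toEnvelGroup X x) := by
  refine Quotient.inductionOn g (fun p => ?_) x
  show ∀ x : X, Abelianization.of (toEnvelGroup X (envelAction (envelMk p) x))
      = Abelianization.of (toEnvelGroup X x)
  induction p with
  | unit =>
      intro x
      rw [envelMk_unit, map_one]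
      rfl
  | incl z =>
      intro x
      rw [envelMk_incl, envelAction_prop]
      have h2 : toEnvelGroup X (z ◃ x)
          = toEnvelGroup X z * toEnvelGroup X x * (toEnvelGroup X z)⁻¹ :=
        (toEnvelGroup X).map_act' (x := z) (y := x)
      rw [h2, map_mul, map_mul, map_inv]
      rw [mul_comm (Abelianization.of (toEnvelGroup X z))]
      group
  | mul a b iha ihb =>
      intro x
      have h2 : envelAction (envelMk a * envelMk b) x
          = envelAction (envelMk a) (envelAction (envelMk b) x) := by
        rw [map_mul]; rfl
      rw [envelMk_mul, h2, iha, ihb]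
  | inv a iha =>
      intro x
      rw [envelMk_inv]
      set y := envelAction (envelMk a)⁻¹ x with hy
      have h2 : envelAction (envelMk a) y = x := by
        rw [hy]
        have h3 : envelAction (envelMk a) (envelAction (envelMk a)⁻¹ x)
            = envelAction (envelMk a * (envelMk a)⁻¹) x := by
          rw [map_mul]; rfl
        rw [h3, mul_inv_cancel, map_one]
        rfl
      have := iha y
      rw [h2] at this
      exact this.symm

/-- for an indecomposable finite quandle, `ker ∂ = [G_X, G_X]`. -/
theorem stmt_2 {X : Type*} [Quandle X] [Fintype X]
    (hind : ∀ x y : X, ∃ g : EnvelGroup X, envelAction g x = y)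
    (d : EnvelGroup X →* Multiplicative ℤ)
    (hd : ∀ x : X, d (toEnvelGroup X x) = Multiplicative.ofAdd 1) :
    MonoidHom.ker d = commutator (EnvelGroup X) := by
  have hcomm : commutator (EnvelGroup X) ≤ MonoidHom.ker d :=
    Abelianization.commutator_subset_ker d
  have hker_of : ∀ g : EnvelGroup X,
      Abelianization.of g = 1 ↔ g ∈ commutator (EnvelGroup X) := fun g =>
    QuotientGroup.eq_one_iff g
  refine le_antisymm ?_ hcomm
  intro g hg
  rw [MonoidHom.mem_ker] at hg
  rcases isEmpty_or_nonempty X with hX | hX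
  · -- X empty: the enveloping group is trivial
    have hm : g ∈ Subgroup.closure (Set.range (toEnvelGroup X)) := by
      rw [envel_closure_range]; trivial
    haveI := hX
    have hr : Set.range (toEnvelGroup X) = (∅ : Set (EnvelGroup X)) :=
      Set.range_eq_empty _
    rw [hr, Subgroup.closure_empty, Subgroup.mem_bot] at hm
    rw [hm]; exact Subgroup.one_mem _
  · obtain ⟨x0⟩ := hX
    set t : EnvelGroup X := toEnvelGroup X x0 with ht
    have hall : ∀ x : X, Abelianization.of (toEnvelGroup X x) = Abelianization.of t := by
      intro x
      obtain ⟨g', hg'⟩ := hind x0 x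
      rw [← hg']
      exact envel_of_act g' x0
    have hmem : g ∈ Subgroup.closure (Set.range (toEnvelGroup X)) := by
      rw [envel_closure_range]; trivial
    have hpow : ∃ n : ℤ, Abelianization.of g = Abelianization.of t ^ n := by
      refine Subgroup.closure_induction
        (p := fun a _ => ∃ n : ℤ, Abelianization.of a = Abelianization.of t ^ n)
        ?_ ?_ ?_ ?_ hmem
      · rintro a ⟨x, rfl⟩
        exact ⟨1, by rw [zpow_one, hall]⟩
      · exact ⟨0, by rw [zpow_zero, map_one]⟩
      · rintro a b _ _ ⟨m, hm⟩ ⟨n, hn⟩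
        exact ⟨m + n, by rw [map_mul, hm, hn, zpow_add]⟩
      · rintro a _ ⟨m, hm⟩
        exact ⟨-m, by rw [map_inv, hm, zpow_neg]⟩
    obtain ⟨n, hn⟩ := hpow
    have hmemc : g * (t ^ n)⁻¹ ∈ commutator (EnvelGroup X) := by
      rw [← hker_of]
      rw [map_mul, map_inv, map_zpow, ← hn, mul_inv_cancel]
    have hdg : d g = d (t ^ n) := by
      have h4 := hcomm hmemc
      rw [MonoidHom.mem_ker, map_mul, map_inv] at h4
      exact mul_inv_eq_one.mp h4
    have hdt : d (t ^ n) = Multiplicative.ofAdd n := by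
      rw [map_zpow, ht, hd x0, ← Int.ofAdd_mul, one_mul]
    have hn0 : n = 0 := by
      have h5 : Multiplicative.ofAdd n = 1 := by rw [← hdt, ← hdg, hg]
      exact_mod_cast (ofAdd_eq_one).mp h5
    rw [← hker_of, hn, hn0, zpow_zero]
end

section
/- Let X be a finite indecomposable quandle. Then the restriction of the G_X-action on X to the commutator subgroup N_X = [G_X, G_X] is transitive: for all x, y ∈ X there exists n ∈ N_X with n·x = y. -/
open Rack Quandles

section Aux

variable {X : Type*} [Quandle X]

/-- Hom extensionality for the enveloping group: two group homs agree if they agree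
on the canonical generators. -/
lemma envel_hom_ext {G : Type*} [Group G] {F F' : EnvelGroup X →* G}
    (h : ∀ y : X, F (toEnvelGroup X y) = F' (toEnvelGroup X y)) : F = F' := by
  have : toEnvelGroup.map.symm F = toEnvelGroup.map.symm F' := by
    apply DFunLike.ext
    intro y
    exact h y
  exact toEnvelGroup.map.symm.injective this

/-- The degree homomorphism `∂ : G_X → ℤ`. -/
def degHom (X : Type*) [Quandle X] : EnvelGroup X →* Multiplicative ℤ :=
  toEnvelGroup.map
    { toFun := fun _ => Multiplicative.ofAdd 1
      map_act' := by
        intro x y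
        rw [Quandle.conj_act_eq_conj]
        group }

@[simp] lemma degHom_gen (y : X) : degHom X (toEnvelGroup X y) = Multiplicative.ofAdd 1 := rfl

/-- In the abelianization, all the canonical generators have the same image as soon as
the action is transitive. -/
lemma of_gen_const (hind : ∀ x y : X, ∃ g : EnvelGroup X, envelAction g x = y) (x y : X) :
    Abelianization.of (toEnvelGroup X y) = Abelianization.of (toEnvelGroup X x) := by
  have key : ∀ (g : EnvelGroup X) (z : X),
      Abelianization.of (toEnvelGroup X (envelAction g z)) =
        Abelianization.of (toEnvelGroup X z) := by
    intro g
    refine Quotient.inductionOn g ?_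
    intro p
    induction p with
    | unit =>
      intro z
      have h1 : envelAction (⟦Rack.PreEnvelGroup.unit⟧ : EnvelGroup X) z = z := rfl
      rw [h1]
    | incl w =>
      intro z
      have h1 : envelAction (⟦Rack.PreEnvelGroup.incl w⟧ : EnvelGroup X) z = w ◃ z := rfl
      rw [h1]
      have h2 : toEnvelGroup X (w ◃ z) =
          toEnvelGroup X w * toEnvelGroup X z * (toEnvelGroup X w)⁻¹ :=
        (toEnvelGroup X).map_act
      rw [h2]
      simp [mul_comm]
    | mul a b iha ihb =>
      intro z
      have h1 : envelAction (⟦Rack.PreEnvelGroup.mul a b⟧ : EnvelGroup X) z =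
          envelAction (⟦a⟧ : EnvelGroup X) (envelAction (⟦b⟧ : EnvelGroup X) z) := rfl
      rw [h1, iha, ihb]
    | inv a iha =>
      intro z
      have h1 : envelAction (⟦Rack.PreEnvelGroup.inv a⟧ : EnvelGroup X) z =
          (envelAction (⟦a⟧ : EnvelGroup X)).symm z := rfl
      rw [h1]
      have := iha ((envelAction (⟦a⟧ : EnvelGroup X)).symm z)
      rw [Equiv.apply_symm_apply] at this; exact this.symm
  obtain ⟨g, hg⟩ := hind x y
  rw [← hg]
  exact key g x

end Aux

/-- the commutator subgroup `N_X = [G_X, G_X]` acts transitively on a finite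
indecomposable quandle `X`. -/
theorem stmt_3 {X : Type*} [Quandle X] [Fintype X]
    (hind : ∀ x y : X, ∃ g : EnvelGroup X, envelAction g x = y) :
    ∀ x y : X, ∃ n ∈ commutator (EnvelGroup X), envelAction n x = y := by
  intro x y
  obtain ⟨g, hg⟩ := hind x y
  -- the hom g ↦ (of (gen x))^(∂ g)
  set χ : EnvelGroup X →* Abelianization (EnvelGroup X) :=
    (zpowersHom (Abelianization (EnvelGroup X))
      (Abelianization.of (toEnvelGroup X x))).comp (degHom X) with hχ
  have hof : (Abelianization.of : EnvelGroup X →* Abelianization (EnvelGroup X)) = χ := by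
    apply envel_hom_ext
    intro z
    rw [hχ]
    simp only [MonoidHom.comp_apply, degHom_gen, zpowersHom_apply]
    rw [of_gen_const hind x z]
    simp
  set k : ℤ := Multiplicative.toAdd (degHom X g) with hk
  have hgab : Abelianization.of g = (Abelianization.of (toEnvelGroup X x)) ^ k := by
    rw [hof, hχ]
    simp [hk]
  refine ⟨(toEnvelGroup X y) ^ (-k) * g, ?_, ?_⟩
  · -- it is in the commutator subgroup
    have h1 : Abelianization.of ((toEnvelGroup X y) ^ (-k) * g) = 1 := by
      rw [map_mul, map_zpow, of_gen_const hind x y, hgab, ← zpow_add]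
      simp
    exact (QuotientGroup.eq_one_iff _).mp h1
  · -- it sends x to y
    rw [map_mul, map_zpow]
    have h3 : envelAction (toEnvelGroup X y) y = y := by
      rw [envelAction_prop]; exact Quandle.fix
    calc ((envelAction (toEnvelGroup X y)) ^ (-k) * envelAction g) x
        = ((envelAction (toEnvelGroup X y)) ^ (-k)) (envelAction g x) :=
          Equiv.Perm.mul_apply _ _ _
      _ = ((envelAction (toEnvelGroup X y)) ^ (-k)) y := by rw [hg]
      _ = y := Equiv.Perm.zpow_apply_eq_self_of_apply_eq_self h3 (-k)
end

section
/- Let G be a group with a finite normal subgroup N such that G/N ≅ ℤ generated by the class of x₀ ∈ G, and let M be a right G-module on which multiplication by |N| is invertible. Then the map j : Z¹(G, M) → Fun(ℤ, M) defined by j(f)(ℓ) = (1/|N|) Σ_{n∈N} ( f(n x₀^ℓ) − f(n) ) takes values in Z¹(ℤ, M^N) (where M^N are the N-invariants), sends coboundaries to coboundaries, and the induced map H¹(G, M) → H¹(G/N, M^N) is a retraction of the inflation map. In particular, the inflation-restriction sequence 0 → H¹(G/N, M^N) → H¹(G, M) → H¹(N, M)^{G/N} → 0 splits. -/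
/-- the averaging map `j` gives a retraction of the inflation map, so the
inflation-restriction sequence `0 → H¹(G/N, M^N) → H¹(G, M) → H¹(N, M)^{G/N} → 0` splits.
Here `G/N ≅ ℤ` is witnessed by a homomorphism `d : G →* ℤ` with kernel `N` sending `x₀` to
the generator, and invertibility of `|N|` on `M` by the additive map `u` inverse to
multiplication by `|N|`. -/
theorem stmt_5 {G M : Type*} [Group G] [AddCommGroup M]
    (sm : M → G → M)
    (sm_one : ∀ m : M, sm m 1 = m)
    (sm_mul : ∀ (m : M) (g h : G), sm (sm m g) h = sm m (g * h))
    (sm_add : ∀ (m m' : M) (g : G), sm (m + m') g = sm m g + sm m' g)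
    (N : Subgroup G) (hN : N.Normal) [Fintype N]
    (x₀ : G)
    (d : G →* Multiplicative ℤ)
    (hker : MonoidHom.ker d = N)
    (hx₀ : d x₀ = Multiplicative.ofAdd 1)
    (u : M →+ M)
    (hu : ∀ m : M, (Fintype.card N) • u m = m)
    (hu' : ∀ m : M, u ((Fintype.card N) • m) = m)
    (j : (G → M) → ℤ → M)
    (hj : ∀ (f : G → M) (ℓ : ℤ),
      j f ℓ = u (∑ n : N, (f ((n : G) * x₀ ^ ℓ) - f (n : G)))) :
    -- (1) `j f` takes values in the `N`-invariants
    (∀ f : G → M, (∀ g h : G, f (g * h) = sm (f g) h + f h) →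
      ∀ (ℓ : ℤ), ∀ n ∈ N, sm (j f ℓ) n = j f ℓ) ∧
    -- (2) `j f` is a 1-cocycle of `ℤ ≅ G/N` with values in `M^N`
    (∀ f : G → M, (∀ g h : G, f (g * h) = sm (f g) h + f h) →
      ∀ ℓ r : ℤ, j f (ℓ + r) = sm (j f ℓ) (x₀ ^ r) + j f r) ∧
    -- (3) `j` sends coboundaries to coboundaries
    (∀ (f : G → M) (ψ : M), (∀ g : G, f g = sm ψ g - ψ) →
      ∃ γ : M, (∀ n ∈ N, sm γ n = γ) ∧ ∀ ℓ : ℤ, j f ℓ = sm γ (x₀ ^ ℓ) - γ) ∧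
    -- (4) `j ∘ inf = id`: `j` retracts the inflation map
    (∀ (f : G → M) (φ : ℤ → M),
      (∀ (ℓ : ℤ), ∀ n ∈ N, sm (φ ℓ) n = φ ℓ) →
      (∀ ℓ r : ℤ, φ (ℓ + r) = sm (φ ℓ) (x₀ ^ r) + φ r) →
      (∀ g : G, f g = φ (Multiplicative.toAdd (d g))) →
      ∀ ℓ : ℤ, j f ℓ = φ ℓ) := by
  haveI := hN
  -- the action by `g` as an additive hom
  let smh : G → M →+ M := fun g => AddMonoidHom.mk' (fun m => sm m g) (fun a b => sm_add a b g)
  have smh_apply : ∀ (m : M) (g : G), smh g m = sm m g := fun _ _ => rfl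
  -- `u` commutes with the action
  have usm : ∀ (m : M) (g : G), u (sm m g) = sm (u m) g := by
    intro m g
    conv_lhs => rw [← hu m, ← smh_apply, map_nsmul, smh_apply, hu']
  -- reindexing sums over `N` by conjugation
  have reindex : ∀ (F : G → M) (g : G),
      ∑ n : N, F (n : G) = ∑ n : N, F (g⁻¹ * (n : G) * g) := by
    intro F g
    refine Fintype.sum_equiv (MulAut.conjNormal g).toEquiv _ _ (fun n => ?_)
    simp only [MulEquiv.toEquiv_eq_coe, EquivLike.coe_coe, MulAut.conjNormal_apply]
    group
  -- reindexing sums over `N` by right multiplication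
  have reindexR : ∀ (F : G → M) (n₀ : N),
      ∑ n : N, F ((n : G) * (n₀ : G)) = ∑ n : N, F (n : G) := by
    intro F n₀
    refine Fintype.sum_equiv (Equiv.mulRight n₀) _ _ (fun n => ?_)
    simp [Equiv.coe_mulRight]
  -- the averaging projection
  set P : M → M := fun m => u (∑ n : N, sm m (n : G)) with hP
  have P_add : ∀ a b : M, P (a + b) = P a + P b := by
    intro a b
    simp only [hP, sm_add, Finset.sum_add_distrib, map_add]
  have P_sub : ∀ a b : M, P (a - b) = P a - P b := by
    intro a b
    have := P_add (a - b) b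
    rw [sub_add_cancel] at this
    rw [this]; abel
  -- P takes values in the invariants
  have P_inv : ∀ (m : M) (n₀ : G), n₀ ∈ N → sm (P m) n₀ = P m := by
    intro m n₀ hn₀
    rw [hP]
    simp only
    rw [← usm, ← smh_apply, map_sum]
    simp only [smh_apply, sm_mul]
    rw [reindexR (fun x => sm m x) ⟨n₀, hn₀⟩]
  -- P commutes with the action
  have P_comm : ∀ (m : M) (g : G), P (sm m g) = sm (P m) g := by
    intro m g
    rw [hP]
    simp only
    rw [← usm]
    congr 1
    simp only [sm_mul]
    rw [reindex (fun x => sm m (g * x)) g, ← smh_apply _ g, map_sum]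
    refine Finset.sum_congr rfl fun n _ => ?_
    rw [smh_apply, sm_mul]
    congr 1; group
  -- the key formula for cocycles
  have key : ∀ f : G → M, (∀ g h : G, f (g * h) = sm (f g) h + f h) →
      ∀ g : G, ∑ n : N, (f ((n : G) * g) - f (n : G)) = ∑ n : N, sm (f g) (n : G) := by
    intro f hf g
    have step : ∀ n : N, f ((n : G) * g) - f (n : G)
        = sm (f g) (g⁻¹ * (n : G) * g) + (f (g⁻¹ * (n : G) * g) - f (n : G)) := by
      intro n
      have : ((n : G) * g) = g * (g⁻¹ * (n : G) * g) := by group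
      rw [this, hf g (g⁻¹ * (n : G) * g)]
      abel
    calc ∑ n : N, (f ((n : G) * g) - f (n : G))
        = ∑ n : N, (sm (f g) (g⁻¹ * (n : G) * g) + (f (g⁻¹ * (n : G) * g) - f (n : G))) := by
          exact Finset.sum_congr rfl (fun n _ => step n)
      _ = (∑ n : N, sm (f g) (g⁻¹ * (n : G) * g))
          + ((∑ n : N, f (g⁻¹ * (n : G) * g)) - ∑ n : N, f (n : G)) := by
          rw [Finset.sum_add_distrib, Finset.sum_sub_distrib]
      _ = ∑ n : N, sm (f g) (n : G) := by
          rw [← reindex (fun x => sm (f g) x) g, ← reindex f g]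
          simp
  have jP : ∀ f : G → M, (∀ g h : G, f (g * h) = sm (f g) h + f h) →
      ∀ ℓ : ℤ, j f ℓ = P (f (x₀ ^ ℓ)) := by
    intro f hf ℓ
    rw [hj, key f hf, hP]
  refine ⟨?_, ?_, ?_, ?_⟩
  · intro f hf ℓ n hn
    rw [jP f hf]
    exact P_inv _ _ hn
  · intro f hf ℓ r
    rw [jP f hf, jP f hf, jP f hf, zpow_add, hf, P_add, P_comm]
  · intro f ψ hf
    have hf' : ∀ g h : G, f (g * h) = sm (f g) h + f h := by
      intro g h
      rw [hf, hf, hf]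
      have : sm (sm ψ g - ψ) h = sm (sm ψ g) h - sm ψ h := by
        have := sm_add (sm ψ g - ψ) ψ h
        rw [sub_add_cancel] at this
        rw [this]; abel
      rw [this, sm_mul]
      abel
    refine ⟨P ψ, fun n hn => P_inv _ _ hn, fun ℓ => ?_⟩
    rw [jP f hf', hf, P_sub, P_comm]
  · intro f φ hφinv hφ hfφ ℓ
    have hφ0 : φ 0 = 0 := by
      have := hφ 0 0
      simp only [add_zero, zpow_zero, sm_one] at this
      have h2 : φ 0 + φ 0 = φ 0 + 0 := by rw [← this, add_zero]
      exact add_left_cancel h2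
    have hdn : ∀ n : N, f (n : G) = 0 := by
      intro n
      have : d (n : G) = 1 := by
        rw [← MonoidHom.mem_ker, hker]; exact n.2
      rw [hfφ, this]
      exact hφ0
    have hdnx : ∀ n : N, f ((n : G) * x₀ ^ ℓ) = φ ℓ := by
      intro n
      have h1 : d ((n : G) * x₀ ^ ℓ) = Multiplicative.ofAdd ℓ := by
        rw [map_mul, show d (n : G) = 1 from by rw [← MonoidHom.mem_ker, hker]; exact n.2,
          one_mul, map_zpow, hx₀]
        rw [← ofAdd_zsmul]
        simp
      rw [hfφ, h1]
      simp
    rw [hj]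
    have : ∑ n : N, (f ((n : G) * x₀ ^ ℓ) - f (n : G)) = (Fintype.card N) • φ ℓ := by
      rw [Finset.sum_congr rfl (fun n _ => by rw [hdnx n, hdn n, sub_zero])]
      simp [Finset.card_univ]
    rw [this, hu']
end

section
/- Let X be a finite indecomposable quandle, x₀ ∈ X, A an abelian group, M = Fun(X, A) with right G_X-action (f·g)(y) = f(g·y), N = [G_X, G_X], and N₀ the stabilizer of x₀ in N. Then every N-invariant function φ ∈ M^N is constant on X, so H¹(ℤ, M^N) ≅ M^N ≅ A via f ↦ f(1)(x₀). -/
open Rack Quandles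

/-- every `N`-invariant function `X → A` is constant (where
`N = [G_X, G_X]` acts transitively on the finite indecomposable quandle `X`), so that
`H¹(ℤ, M^N) ≅ M^N ≅ A` via evaluation at `x₀`. -/
theorem stmt_6 {X : Type*} [Quandle X] [Fintype X] {A : Type*} [AddCommGroup A]
    (hind : ∀ x y : X, ∃ n ∈ commutator (EnvelGroup X), envelAction n x = y)
    (x₀ : X) :
    (∀ φ : X → A,
      (∀ n ∈ commutator (EnvelGroup X), ∀ y : X, φ (envelAction n y) = φ y) →
      ∀ y z : X, φ y = φ z) ∧
    Function.Bijective
      (fun φ : {φ : X → A //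
          ∀ n ∈ commutator (EnvelGroup X), ∀ y : X, φ (envelAction n y) = φ y} =>
        φ.1 x₀) := by
  have hconst : ∀ φ : X → A,
      (∀ n ∈ commutator (EnvelGroup X), ∀ y : X, φ (envelAction n y) = φ y) →
      ∀ y z : X, φ y = φ z := by
    intro φ hφ y z
    obtain ⟨n, hn, hnz⟩ := hind z y
    rw [← hnz, hφ n hn z]
  refine ⟨hconst, ?_, ?_⟩
  · rintro ⟨φ, hφ⟩ ⟨ψ, hψ⟩ h
    ext y
    calc φ y = φ x₀ := hconst φ hφ y x₀
    _ = ψ x₀ := h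
    _ = ψ y := (hconst ψ hψ y x₀).symm
  · intro a
    exact ⟨⟨fun _ => a, fun _ _ _ => rfl⟩, rfl⟩
end

section
/- With X a finite indecomposable quandle, x₀ ∈ X, A an abelian group with trivial G_X-action, M = Fun(X, A), N = [G_X,G_X] (acting transitively on X), N₀ = Stab_N(x₀): the induced map H¹(N, M) → Hom(N₀, A), f ↦ f₀ with f₀(n₀) = f(n₀)(x₀), is injective. Concretely, if f ∈ Z¹(N,M) satisfies f(n₀)(x₀) = 0 for all n₀ ∈ N₀, then f is a coboundary, witnessed by φ ∈ M defined by φ(n·x₀) = f(n)(x₀). -/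
open Rack Quandles

/-- the map `H¹(N, M) → Hom(N₀, A)`, `f ↦ f₀`, is injective: if a 1-cocycle
`f` of `N = [G_X, G_X]` with values in `M = Fun(X, A)` satisfies `f(n₀)(x₀) = 0` for all
`n₀` in the stabilizer `N₀`, then `f` is a coboundary, witnessed by `φ` with
`φ(n·x₀) = f(n)(x₀)`. -/
theorem stmt_8 {X : Type*} [Quandle X] [Fintype X] {A : Type*} [AddCommGroup A]
    (hind : ∀ x y : X, ∃ n ∈ commutator (EnvelGroup X), envelAction n x = y)
    (x₀ : X)
    (f : EnvelGroup X → X → A)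
    (hf : ∀ n m : EnvelGroup X, n ∈ commutator (EnvelGroup X) →
      m ∈ commutator (EnvelGroup X) →
      ∀ y : X, f (n * m) y = f n (envelAction m y) + f m y)
    (h0 : ∀ n ∈ commutator (EnvelGroup X), envelAction n x₀ = x₀ → f n x₀ = 0) :
    ∃ φ : X → A,
      (∀ n ∈ commutator (EnvelGroup X), φ (envelAction n x₀) = f n x₀) ∧
      (∀ n ∈ commutator (EnvelGroup X), ∀ y : X, f n y = φ (envelAction n y) - φ y) := by
  classical
  choose g hgmem hg using fun x => hind x₀ x
  set φ : X → A := fun x => f (g x) x₀ with hφ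
  have key : ∀ n ∈ commutator (EnvelGroup X), φ (envelAction n x₀) = f n x₀ := by
    intro n hn
    set x := envelAction n x₀ with hx
    have hm := hgmem x
    have hmx : envelAction (g x) x₀ = x := hg x
    have hmem : (g x)⁻¹ * n ∈ commutator (EnvelGroup X) :=
      (commutator (EnvelGroup X)).mul_mem ((commutator (EnvelGroup X)).inv_mem hm) hn
    have hfix : envelAction ((g x)⁻¹ * n) x₀ = x₀ := by
      rw [map_mul]
      show envelAction (g x)⁻¹ (envelAction n x₀) = x₀
      rw [← hx, map_inv]
      exact (Equiv.symm_apply_eq _).mpr hmx.symm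
    have h1 := hf (g x) ((g x)⁻¹ * n) hm hmem x₀
    rw [mul_inv_cancel_left, hfix, h0 _ hmem hfix, add_zero] at h1
    simpa [φ] using h1.symm
  refine ⟨φ, key, fun n hn y => ?_⟩
  obtain ⟨k, hk, hky⟩ := hind x₀ y
  have hmul : envelAction n y = envelAction (n * k) x₀ := by
    rw [map_mul]; show _ = envelAction n (envelAction k x₀); rw [hky]
  have hnk : n * k ∈ commutator (EnvelGroup X) := (commutator (EnvelGroup X)).mul_mem hn hk
  rw [hmul, key _ hnk, ← hky, key _ hk, hf n k hn hk x₀, hky]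
  abel
end

section
/- With X a finite indecomposable quandle and notation as above, the map H¹(N, M) → Hom(N₀, A), f ↦ f₀, is surjective: given a group homomorphism g : N₀ → A and a choice of coset representatives N = ⊔ᵢ σᵢ N₀ with σ : N → {σᵢ} and c(n) = σ(n)⁻¹ n ∈ N₀, the formula f(n)(x) = g(c(nm)) − g(c(m)), where m ∈ N satisfies x = m·x₀, gives a well-defined 1-cocycle f ∈ Z¹(N, M) with f₀ = g. -/
open Rack Quandles

/-- the map `H¹(N, M) → Hom(N₀, A)`, `f ↦ f₀`, is surjective: given a
homomorphism `g : N₀ → A` and a system of left coset representatives `σ` for `N₀` in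
`N = [G_X, G_X]` (with `c(n) = σ(n)⁻¹ n ∈ N₀`), the formula
`f(n)(x) = g(c(nm)) − g(c(m))`, where `m·x₀ = x`, gives a well-defined 1-cocycle `f` of
`N` with values in `Fun(X, A)` such that `f₀ = g`. -/
theorem stmt_9 {X : Type*} [Quandle X] [Fintype X] {A : Type*} [AddCommGroup A]
    (hind : ∀ x y : X, ∃ n ∈ commutator (EnvelGroup X), envelAction n x = y)
    (x₀ : X)
    -- the coset representative function σ for N₀ in N
    (σ : EnvelGroup X → EnvelGroup X)
    (hσN : ∀ n ∈ commutator (EnvelGroup X), σ n ∈ commutator (EnvelGroup X))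
    (hσc : ∀ n ∈ commutator (EnvelGroup X), envelAction ((σ n)⁻¹ * n) x₀ = x₀)
    (hσcoset : ∀ n ∈ commutator (EnvelGroup X), ∀ n₀ ∈ commutator (EnvelGroup X),
      envelAction n₀ x₀ = x₀ → σ (n * n₀) = σ n)
    -- the homomorphism g : N₀ → A
    (g : EnvelGroup X → A)
    (hg : ∀ a b : EnvelGroup X,
      a ∈ commutator (EnvelGroup X) → envelAction a x₀ = x₀ →
      b ∈ commutator (EnvelGroup X) → envelAction b x₀ = x₀ →
      g (a * b) = g a + g b) :
    ∃ f : EnvelGroup X → X → A,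
      -- f is given by the formula f(n)(x) = g(c(nm)) − g(c(m)) whenever m·x₀ = x
      (∀ n ∈ commutator (EnvelGroup X), ∀ m ∈ commutator (EnvelGroup X), ∀ x : X,
        envelAction m x₀ = x →
        f n x = g ((σ (n * m))⁻¹ * (n * m)) - g ((σ m)⁻¹ * m)) ∧
      -- f is a 1-cocycle
      (∀ n m : EnvelGroup X, n ∈ commutator (EnvelGroup X) →
        m ∈ commutator (EnvelGroup X) →
        ∀ y : X, f (n * m) y = f n (envelAction m y) + f m y) ∧
      -- f₀ = g
      (∀ n ∈ commutator (EnvelGroup X), envelAction n x₀ = x₀ → f n x₀ = g n) := by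
  classical
  choose mfun hmN hmx using fun x => hind x₀ x
  have hcN : ∀ n ∈ commutator (EnvelGroup X), (σ n)⁻¹ * n ∈ commutator (EnvelGroup X) :=
    fun n hn => mul_mem (inv_mem (hσN n hn)) hn
  -- well-definedness of the formula
  have key : ∀ n ∈ commutator (EnvelGroup X), ∀ m ∈ commutator (EnvelGroup X),
      ∀ m' ∈ commutator (EnvelGroup X), envelAction m x₀ = envelAction m' x₀ →
      g ((σ (n * m'))⁻¹ * (n * m')) - g ((σ m')⁻¹ * m')
        = g ((σ (n * m))⁻¹ * (n * m)) - g ((σ m)⁻¹ * m) := by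
    intro n hn m hm m' hm' hx
    set n₀ := m⁻¹ * m' with hn₀def
    have hn₀ : n₀ ∈ commutator (EnvelGroup X) := mul_mem (inv_mem hm) hm'
    have hn₀fix : envelAction n₀ x₀ = x₀ := by
      rw [hn₀def, map_mul, Equiv.Perm.mul_apply, ← hx, ← Equiv.Perm.mul_apply, ← map_mul,
        inv_mul_cancel, map_one, Equiv.Perm.one_apply]
    have hm'eq : m' = m * n₀ := by rw [hn₀def, ← mul_assoc, mul_inv_cancel, one_mul]
    have hσm' : σ m' = σ m := by rw [hm'eq]; exact hσcoset m hm n₀ hn₀ hn₀fix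
    have hσnm' : σ (n * m') = σ (n * m) := by
      rw [hm'eq, ← mul_assoc]; exact hσcoset (n * m) (mul_mem hn hm) n₀ hn₀ hn₀fix
    have h1 : g ((σ m')⁻¹ * m') = g ((σ m)⁻¹ * m) + g n₀ := by
      rw [hσm', hm'eq, ← mul_assoc]
      exact hg _ _ (hcN m hm) (hσc m hm) hn₀ hn₀fix
    have h2 : g ((σ (n * m'))⁻¹ * (n * m')) = g ((σ (n * m))⁻¹ * (n * m)) + g n₀ := by
      rw [hσnm', hm'eq, ← mul_assoc n m n₀, ← mul_assoc ((σ (n * m))⁻¹)]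
      exact hg _ _ (hcN (n * m) (mul_mem hn hm)) (hσc (n * m) (mul_mem hn hm)) hn₀ hn₀fix
    rw [h1, h2]; abel
  refine ⟨fun n x => g ((σ (n * mfun x))⁻¹ * (n * mfun x)) - g ((σ (mfun x))⁻¹ * mfun x),
    ?_, ?_, ?_⟩
  · intro n hn m hm x hx
    exact key n hn m hm (mfun x) (hmN x) (hx.trans (hmx x).symm)
  · intro n m hn hm y
    dsimp only
    have h1 : g ((σ (n * (m * mfun y)))⁻¹ * (n * (m * mfun y)))
        - g ((σ (m * mfun y))⁻¹ * (m * mfun y))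
        = g ((σ (n * mfun (envelAction m y)))⁻¹ * (n * mfun (envelAction m y)))
          - g ((σ (mfun (envelAction m y)))⁻¹ * mfun (envelAction m y)) := by
      refine (key n hn (m * mfun y) (mul_mem hm (hmN y))
        (mfun (envelAction m y)) (hmN _) ?_).symm
      rw [map_mul, Equiv.Perm.mul_apply, hmx y, hmx (envelAction m y)]
    rw [← h1, mul_assoc]
    abel
  · intro n hn hfix
    dsimp only
    have h1 : g ((σ (n * mfun x₀))⁻¹ * (n * mfun x₀)) - g ((σ (mfun x₀))⁻¹ * mfun x₀)
        = g ((σ (n * 1))⁻¹ * (n * 1)) - g ((σ 1)⁻¹ * 1) :=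
      key n hn 1 (one_mem _) (mfun x₀) (hmN x₀) (by rw [hmx x₀, map_one, Equiv.Perm.one_apply])
    rw [h1, mul_one, mul_one]
    have hσn : σ n = σ 1 := by
      have := hσcoset 1 (one_mem _) n hn hfix
      rwa [one_mul] at this
    have hσ1fix : envelAction (σ 1)⁻¹ x₀ = x₀ := by
      have := hσc 1 (one_mem _); rwa [mul_one] at this
    rw [hσn, hg _ _ (inv_mem (hσN 1 (one_mem _))) hσ1fix hn hfix]
    abel
end

section
/- Let N = ⊔ᵢ σᵢN₀ be a good coset decomposition (σ₀ = 1, conjugation by x₀ permutes the σᵢ, and every x ∈ X equals some σⱼ·x₀). Then c(x₀ n x₀⁻¹) = c(n) for all n ∈ N, where c(n) = σ(n)⁻¹n ∈ N₀. -/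
open Rack Quandles

private def egmk {X : Type*} [Rack X] (a : PreEnvelGroup X) : EnvelGroup X := ⟦a⟧

private lemma egmk_mul {X : Type*} [Rack X] (a b : PreEnvelGroup X) :
    egmk (a.mul b) = egmk a * egmk b := rfl

private lemma egmk_inv {X : Type*} [Rack X] (a : PreEnvelGroup X) :
    egmk a.inv = (egmk a)⁻¹ := rfl

private lemma egmk_unit {X : Type*} [Rack X] :
    (egmk (PreEnvelGroup.unit : PreEnvelGroup X)) = 1 := rfl

private lemma egmk_incl {X : Type*} [Rack X] (x : X) :
    egmk (PreEnvelGroup.incl x) = (toEnvelGroup X x : EnvelGroup X) := rfl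

private lemma envelGroup_conj_incl_aux {X : Type*} [Rack X] (a : PreEnvelGroup X) :
    ∀ y : X, egmk a * (toEnvelGroup X y : EnvelGroup X) * (egmk a)⁻¹
      = (toEnvelGroup X (envelAction (egmk a) y) : EnvelGroup X) := by
  induction a with
  | unit => intro y; simp [egmk_unit]
  | incl x =>
    intro y
    rw [egmk_incl, envelAction_prop]
    exact ((toEnvelGroup X).map_act (x := x) (y := y)).symm
  | mul a b iha ihb =>
    intro y
    rw [egmk_mul]
    have h2 : egmk a * egmk b * (toEnvelGroup X y : EnvelGroup X) * (egmk a * egmk b)⁻¹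
        = egmk a * (egmk b * (toEnvelGroup X y : EnvelGroup X) * (egmk b)⁻¹)
          * (egmk a)⁻¹ := by group
    rw [h2, ihb, iha]
    have h3 : envelAction (egmk a * egmk b) y
        = envelAction (egmk a) (envelAction (egmk b) y) := by rw [map_mul]; rfl
    rw [h3]
  | inv a iha =>
    intro y
    rw [egmk_inv]
    have key := iha (envelAction ((egmk a)⁻¹) y)
    have h3 : envelAction (egmk a) (envelAction ((egmk a)⁻¹) y) = y := by
      have : envelAction (egmk a * (egmk a)⁻¹) y = y := by simp
      rw [map_mul] at this
      exact this
    rw [h3] at key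
    rw [← key]; group

/-- Conjugation in the enveloping group acts on generators via `envelAction`. -/
lemma envelGroup_conj_incl {X : Type*} [Rack X] (g : EnvelGroup X) (y : X) :
    g * (toEnvelGroup X y : EnvelGroup X) * g⁻¹
      = (toEnvelGroup X (envelAction g y) : EnvelGroup X) := by
  induction g using Quotient.inductionOn with
  | h a => exact envelGroup_conj_incl_aux a y

/-- If `g` fixes `x₀` under `envelAction`, then `g` commutes with `toEnvelGroup X x₀`. -/
lemma envelGroup_comm_of_fix {X : Type*} [Rack X] {g : EnvelGroup X} {x₀ : X}
    (h : envelAction g x₀ = x₀) :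
    g * (toEnvelGroup X x₀ : EnvelGroup X) = (toEnvelGroup X x₀ : EnvelGroup X) * g := by
  have := envelGroup_conj_incl g x₀
  rw [h] at this
  calc g * (toEnvelGroup X x₀ : EnvelGroup X)
      = g * (toEnvelGroup X x₀ : EnvelGroup X) * g⁻¹ * g := by group
    _ = (toEnvelGroup X x₀ : EnvelGroup X) * g := by rw [this]

/-- for a good coset decomposition of `N = [G_X, G_X]` into `N₀`-cosets,
the map `c(n) = σ(n)⁻¹ n` is invariant under conjugation by `x₀`:
`c(x₀ n x₀⁻¹) = c(n)` for all `n ∈ N`. -/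
theorem stmt_12 {X : Type*} [Quandle X] [Fintype X]
    (hind : ∀ x y : X, ∃ n ∈ commutator (EnvelGroup X), envelAction n x = y)
    (x₀ : X)
    (σ : EnvelGroup X → EnvelGroup X)
    (hσN : ∀ n ∈ commutator (EnvelGroup X), σ n ∈ commutator (EnvelGroup X))
    (hσc : ∀ n ∈ commutator (EnvelGroup X), envelAction ((σ n)⁻¹ * n) x₀ = x₀)
    (hσcoset : ∀ n ∈ commutator (EnvelGroup X), ∀ m ∈ commutator (EnvelGroup X),
      envelAction (n⁻¹ * m) x₀ = x₀ → σ n = σ m)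
    (hσone : σ 1 = 1)
    (hσconj : ∀ n ∈ commutator (EnvelGroup X),
      σ ((toEnvelGroup X x₀ : EnvelGroup X) * σ n * (toEnvelGroup X x₀ : EnvelGroup X)⁻¹)
        = (toEnvelGroup X x₀ : EnvelGroup X) * σ n * (toEnvelGroup X x₀ : EnvelGroup X)⁻¹)
    (hσcover : ∀ x : X, ∃ n ∈ commutator (EnvelGroup X), σ n = n ∧ envelAction n x₀ = x) :
    ∀ n ∈ commutator (EnvelGroup X),
      (σ ((toEnvelGroup X x₀ : EnvelGroup X) * n * (toEnvelGroup X x₀ : EnvelGroup X)⁻¹))⁻¹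
          * ((toEnvelGroup X x₀ : EnvelGroup X) * n * (toEnvelGroup X x₀ : EnvelGroup X)⁻¹)
        = (σ n)⁻¹ * n := by
  intro n hn
  set t : EnvelGroup X := (toEnvelGroup X x₀ : EnvelGroup X) with ht
  have hσn : σ n ∈ commutator (EnvelGroup X) := hσN n hn
  have hc : envelAction ((σ n)⁻¹ * n) x₀ = x₀ := hσc n hn
  -- t fixes x₀
  have htx : envelAction t x₀ = x₀ := by
    rw [ht, envelAction_prop]; exact Quandle.fix
  have htx' : envelAction t⁻¹ x₀ = x₀ := by
    have : envelAction (t⁻¹ * t) x₀ = x₀ := by simp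
    rw [map_mul] at this
    calc envelAction t⁻¹ x₀ = envelAction t⁻¹ (envelAction t x₀) := by rw [htx]
      _ = x₀ := this
  -- the inverse of c(n) fixes x₀ too
  have hc' : envelAction (n⁻¹ * σ n) x₀ = x₀ := by
    have h1 : envelAction ((n⁻¹ * σ n) * ((σ n)⁻¹ * n)) x₀ = x₀ := by
      have : (n⁻¹ * σ n) * ((σ n)⁻¹ * n) = 1 := by group
      rw [this]; simp
    rw [map_mul] at h1
    calc envelAction (n⁻¹ * σ n) x₀
        = envelAction (n⁻¹ * σ n) (envelAction ((σ n)⁻¹ * n) x₀) := by rw [hc]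
      _ = x₀ := h1
  -- conjugates lie in the commutator
  have hconj1 : t * n * t⁻¹ ∈ commutator (EnvelGroup X) :=
    Subgroup.Normal.conj_mem inferInstance n hn t
  have hconj2 : t * σ n * t⁻¹ ∈ commutator (EnvelGroup X) :=
    Subgroup.Normal.conj_mem inferInstance (σ n) hσn t
  -- σ(t n t⁻¹) = t σ(n) t⁻¹
  have step1 : σ (t * n * t⁻¹) = t * σ n * t⁻¹ := by
    have hfix : envelAction ((t * n * t⁻¹)⁻¹ * (t * σ n * t⁻¹)) x₀ = x₀ := by
      have he : (t * n * t⁻¹)⁻¹ * (t * σ n * t⁻¹) = t * (n⁻¹ * σ n) * t⁻¹ := by group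
      rw [he, map_mul, map_mul]
      show envelAction t (envelAction (n⁻¹ * σ n) (envelAction t⁻¹ x₀)) = x₀
      rw [htx', hc', htx]
    have := hσcoset _ hconj1 _ hconj2 hfix
    rw [this, hσconj n hn]
  -- c(n) commutes with t
  have hcomm : ((σ n)⁻¹ * n) * t = t * ((σ n)⁻¹ * n) := envelGroup_comm_of_fix hc
  rw [step1]
  have : (t * σ n * t⁻¹)⁻¹ * (t * n * t⁻¹) = t * ((σ n)⁻¹ * n) * t⁻¹ := by group
  rw [this, ← hcomm]
  group
end

section
/- Let X be a finite indecomposable quandle, x₀ ∈ X, A an abelian group. Fix a good coset decomposition N = ⊔ σᵢN₀, with c : N → N₀ and σ_y as above. For every a ∈ A and every group homomorphism g : N₀ → A, the map q : X × X → A defined by q(x, y) = a + g(c(x σ_y x₀⁻¹)) satisfies the rack 2-cocycle condition: q(x▷y, x▷z) + q(x, z) = q(x, y▷z) + q(y, z) for all x, y, z ∈ X. -/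
open Rack Quandles

/-! The element `u σ_v x₀⁻¹` lies in `N` and moves `x₀` to `u ◃ v`, so its coset representative
is `σ_{u ◃ v}` and `q(u, v) = a + g(C(u, v))` with `C(u, v) = σ_{u ◃ v}⁻¹ u σ_v x₀⁻¹ ∈ N₀`.
Since `σ_u x₀ σ_u⁻¹ = u` in `G_X`, the multiplicative identity
`C(x ◃ y, x ◃ z) C(x, z) = C(x, y ◃ z) C(y, z)` already holds in `G_X`, and `g` turns it into the
cocycle condition. -/

section EnvelGroup

variable {R : Type*} [Rack R]

theorem closure_range_toEnvelGroup :
    Subgroup.closure (Set.range (toEnvelGroup R : R → EnvelGroup R)) = ⊤ := by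
  refine (Subgroup.eq_top_iff' _).mpr fun g => Quotient.inductionOn g fun p => ?_
  induction p with
  | unit => exact one_mem _
  | incl x => exact Subgroup.subset_closure ⟨x, rfl⟩
  | mul a b ha hb => exact mul_mem ha hb
  | inv a ha => exact inv_mem ha

theorem conj_toEnvelGroup (g : EnvelGroup R) (x : R) :
    g * toEnvelGroup R x * g⁻¹ = toEnvelGroup R (envelAction g x) := by
  have hg : g ∈ Subgroup.closure (Set.range (toEnvelGroup R : R → EnvelGroup R)) := by
    rw [closure_range_toEnvelGroup]; exact Subgroup.mem_top g
  induction hg using Subgroup.closure_induction generalizing x with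
  | mem _ hy =>
    obtain ⟨y, rfl⟩ := hy
    rw [envelAction_prop, ShelfHom.map_act]
    rfl
  | one => simp
  | mul g h _ _ hg hh =>
    rw [map_mul, Equiv.Perm.mul_apply, ← hg, ← hh]
    group
  | inv g _ hg =>
    have := hg (envelAction g⁻¹ x)
    rw [← Equiv.Perm.mul_apply, ← map_mul, mul_inv_cancel, map_one, Equiv.Perm.one_apply] at this
    rw [← this]
    group

theorem toEnvelGroup_act (x y : R) :
    (toEnvelGroup R (x ◃ y) : EnvelGroup R) =
      toEnvelGroup R x * toEnvelGroup R y * (toEnvelGroup R x)⁻¹ :=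
  ShelfHom.map_act _

theorem toEnvelGroup_envelAction_mul_inv_mem_commutator (m : EnvelGroup R) (x : R) :
    toEnvelGroup R (envelAction m x) * (toEnvelGroup R x : EnvelGroup R)⁻¹ ∈
      commutator (EnvelGroup R) := by
  rw [← conj_toEnvelGroup, commutator_def]
  exact Subgroup.commutator_mem_commutator (Subgroup.mem_top m) (Subgroup.mem_top _)

end EnvelGroup

section StabComponent

variable {R : Type*} [Rack R] (x₀ : R) (s : R → EnvelGroup R)

/-- `u σ_v x₀⁻¹` in the paper's notation. -/
def liftAct (u v : R) : EnvelGroup R :=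
  toEnvelGroup R u * s v * (toEnvelGroup R x₀)⁻¹

/-- `c(u σ_v x₀⁻¹)` in the paper's notation, once `σ_{u ◃ v}` is known to be the coset
representative of `u σ_v x₀⁻¹`. -/
def stabComponent (u v : R) : EnvelGroup R :=
  (s (u ◃ v))⁻¹ * liftAct x₀ s u v

variable {x₀ s}

theorem liftAct_mem_commutator (hconn : ∀ u, ∃ m : EnvelGroup R, envelAction m x₀ = u)
    (hsN : ∀ v, s v ∈ commutator (EnvelGroup R)) (u v : R) :
    liftAct x₀ s u v ∈ commutator (EnvelGroup R) := by
  obtain ⟨m, rfl⟩ := hconn u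
  have h : liftAct x₀ s (envelAction m x₀) v =
      (toEnvelGroup R (envelAction m x₀) * (toEnvelGroup R x₀)⁻¹) *
        (toEnvelGroup R x₀ * s v * (toEnvelGroup R x₀)⁻¹) := by
    simp only [liftAct]; group
  rw [h]
  exact mul_mem (toEnvelGroup_envelAction_mul_inv_mem_commutator m x₀)
    ((Subgroup.commutator_normal ⊤ ⊤).conj_mem _ (hsN v) _)

theorem stabComponent_mem_commutator (hconn : ∀ u, ∃ m : EnvelGroup R, envelAction m x₀ = u)
    (hsN : ∀ v, s v ∈ commutator (EnvelGroup R)) (u v : R) :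
    stabComponent x₀ s u v ∈ commutator (EnvelGroup R) :=
  mul_mem (inv_mem (hsN _)) (liftAct_mem_commutator hconn hsN u v)

theorem conj_inv_toEnvelGroup_of_envelAction (hsact : ∀ y, envelAction (s y) x₀ = y) (u : R) :
    s u * (toEnvelGroup R x₀)⁻¹ * (s u)⁻¹ = (toEnvelGroup R u)⁻¹ := by
  have h := conj_toEnvelGroup (s u) x₀
  rw [hsact] at h
  rw [← h]; group

theorem stabComponent_cocycle (hsact : ∀ y, envelAction (s y) x₀ = y) (x y z : R) :
    stabComponent x₀ s (x ◃ y) (x ◃ z) * stabComponent x₀ s x z =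
      stabComponent x₀ s x (y ◃ z) * stabComponent x₀ s y z := by
  have lhs : stabComponent x₀ s (x ◃ y) (x ◃ z) * stabComponent x₀ s x z =
      (s (x ◃ y ◃ z))⁻¹ * toEnvelGroup R (x ◃ y) *
        (s (x ◃ z) * (toEnvelGroup R x₀)⁻¹ * (s (x ◃ z))⁻¹) *
        toEnvelGroup R x * s z * (toEnvelGroup R x₀)⁻¹ := by
    simp only [stabComponent, liftAct, ← Shelf.self_distrib]; group
  have rhs : stabComponent x₀ s x (y ◃ z) * stabComponent x₀ s y z =
      (s (x ◃ y ◃ z))⁻¹ * toEnvelGroup R x *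
        (s (y ◃ z) * (toEnvelGroup R x₀)⁻¹ * (s (y ◃ z))⁻¹) *
        toEnvelGroup R y * s z * (toEnvelGroup R x₀)⁻¹ := by
    simp only [stabComponent, liftAct]; group
  rw [lhs, rhs, conj_inv_toEnvelGroup_of_envelAction hsact,
    conj_inv_toEnvelGroup_of_envelAction hsact, toEnvelGroup_act, toEnvelGroup_act, toEnvelGroup_act]
  group

end StabComponent

section StabComponentQuandle

variable {Q : Type*} [Quandle Q] {x₀ : Q} {s : Q → EnvelGroup Q}

theorem envelAction_liftAct (hsact : ∀ y, envelAction (s y) x₀ = y) (u v : Q) :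
    envelAction (liftAct x₀ s u v) x₀ = u ◃ v := by
  have hfix : envelAction (toEnvelGroup Q x₀)⁻¹ x₀ = x₀ := by
    rw [map_inv, Equiv.Perm.inv_eq_iff_eq, envelAction_prop, Quandle.fix]
  simp only [liftAct, map_mul, Equiv.Perm.mul_apply, hfix, hsact, envelAction_prop]

theorem envelAction_stabComponent (hsact : ∀ y, envelAction (s y) x₀ = y) (u v : Q) :
    envelAction (stabComponent x₀ s u v) x₀ = x₀ := by
  rw [stabComponent, map_mul, Equiv.Perm.mul_apply, envelAction_liftAct hsact, map_inv,
    Equiv.Perm.inv_eq_iff_eq, hsact]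

end StabComponentQuandle

theorem stmt_14_general {X : Type*} [Quandle X] {A : Type*} [AddCommGroup A]
    (hind : ∀ x y : X, ∃ n ∈ commutator (EnvelGroup X), envelAction n x = y)
    (x₀ : X)
    -- the good coset decomposition
    (σ : EnvelGroup X → EnvelGroup X)
    (hσcoset : ∀ n ∈ commutator (EnvelGroup X), ∀ m ∈ commutator (EnvelGroup X),
      envelAction (n⁻¹ * m) x₀ = x₀ → σ n = σ m)
    -- σ_y : the representative sending x₀ to y
    (s : X → EnvelGroup X)
    (hsN : ∀ y : X, s y ∈ commutator (EnvelGroup X))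
    (hsrep : ∀ y : X, σ (s y) = s y)
    (hsact : ∀ y : X, envelAction (s y) x₀ = y)
    -- the datum (a, g) with g a homomorphism N₀ → A
    (a : A) (g : EnvelGroup X → A)
    (hg : ∀ b c : EnvelGroup X,
      b ∈ commutator (EnvelGroup X) → envelAction b x₀ = x₀ →
      c ∈ commutator (EnvelGroup X) → envelAction c x₀ = x₀ →
      g (b * c) = g b + g c)
    -- the 2-cochain q
    (q : X → X → A)
    (hq : ∀ x y : X, q x y =
      a + g ((σ ((toEnvelGroup X x : EnvelGroup X) * s y
              * (toEnvelGroup X x₀ : EnvelGroup X)⁻¹))⁻¹ *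
            ((toEnvelGroup X x : EnvelGroup X) * s y
              * (toEnvelGroup X x₀ : EnvelGroup X)⁻¹))) :
    ∀ x y z : X, q (x ◃ y) (x ◃ z) + q x z = q x (y ◃ z) + q y z := by
  intro x y z
  have hconn : ∀ u, ∃ m : EnvelGroup X, envelAction m x₀ = u := fun u =>
    (hind x₀ u).imp fun _ hm => hm.2
  have hσ : ∀ u v, σ (liftAct x₀ s u v) = s (u ◃ v) := fun u v => by
    rw [← hsrep (u ◃ v)]
    refine hσcoset _ (liftAct_mem_commutator hconn hsN u v) _ (hsN _) ?_
    rw [map_mul, Equiv.Perm.mul_apply, hsact, map_inv, Equiv.Perm.inv_eq_iff_eq,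
      envelAction_liftAct hsact]
  have hq' : ∀ u v, q u v = a + g (stabComponent x₀ s u v) := fun u v => by
    rw [hq, ← liftAct, hσ]; rfl
  have hg' : ∀ u v u' v', g (stabComponent x₀ s u v * stabComponent x₀ s u' v') =
      g (stabComponent x₀ s u v) + g (stabComponent x₀ s u' v') := fun u v u' v' =>
    hg _ _ (stabComponent_mem_commutator hconn hsN u v) (envelAction_stabComponent hsact u v)
      (stabComponent_mem_commutator hconn hsN u' v') (envelAction_stabComponent hsact u' v')
  have hsum := congrArg g (stabComponent_cocycle hsact x y z)
  rw [hg', hg'] at hsum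
  simp only [hq']
  rw [add_add_add_comm, hsum, add_add_add_comm]

/-- Reconstruction, Theorem 1.2 of the paper: for every `a ∈ A` and every
homomorphism `g : N₀ → A`, the map `q(x, y) = a + g(c(x σ_y x₀⁻¹))` is a rack 2-cocycle
on the finite indecomposable quandle `X`. -/
theorem stmt_14 {X : Type*} [Quandle X] [Fintype X] {A : Type*} [AddCommGroup A]
    (hind : ∀ x y : X, ∃ n ∈ commutator (EnvelGroup X), envelAction n x = y)
    (x₀ : X)
    -- the good coset decomposition
    (σ : EnvelGroup X → EnvelGroup X)
    (hσN : ∀ n ∈ commutator (EnvelGroup X), σ n ∈ commutator (EnvelGroup X))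
    (hσc : ∀ n ∈ commutator (EnvelGroup X), envelAction ((σ n)⁻¹ * n) x₀ = x₀)
    (hσcoset : ∀ n ∈ commutator (EnvelGroup X), ∀ m ∈ commutator (EnvelGroup X),
      envelAction (n⁻¹ * m) x₀ = x₀ → σ n = σ m)
    (hσone : σ 1 = 1)
    (hσconj : ∀ n ∈ commutator (EnvelGroup X),
      σ ((toEnvelGroup X x₀ : EnvelGroup X) * σ n * (toEnvelGroup X x₀ : EnvelGroup X)⁻¹)
        = (toEnvelGroup X x₀ : EnvelGroup X) * σ n * (toEnvelGroup X x₀ : EnvelGroup X)⁻¹)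
    -- σ_y : the representative sending x₀ to y
    (s : X → EnvelGroup X)
    (hsN : ∀ y : X, s y ∈ commutator (EnvelGroup X))
    (hsrep : ∀ y : X, σ (s y) = s y)
    (hsact : ∀ y : X, envelAction (s y) x₀ = y)
    -- the datum (a, g) with g a homomorphism N₀ → A
    (a : A) (g : EnvelGroup X → A)
    (hg : ∀ b c : EnvelGroup X,
      b ∈ commutator (EnvelGroup X) → envelAction b x₀ = x₀ →
      c ∈ commutator (EnvelGroup X) → envelAction c x₀ = x₀ →
      g (b * c) = g b + g c)
    -- the 2-cochain q
    (q : X → X → A)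
    (hq : ∀ x y : X, q x y =
      a + g ((σ ((toEnvelGroup X x : EnvelGroup X) * s y
              * (toEnvelGroup X x₀ : EnvelGroup X)⁻¹))⁻¹ *
            ((toEnvelGroup X x : EnvelGroup X) * s y
              * (toEnvelGroup X x₀ : EnvelGroup X)⁻¹))) :
    ∀ x y z : X, q (x ◃ y) (x ◃ z) + q x z = q x (y ◃ z) + q y z :=
  stmt_14_general hind x₀ σ hσcoset s hsN hsrep hsact a g hg q hq
end
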